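/- Let q > 0, a > 0, and let f : (−L, L) → ℝ be a twice differentiable positive solution of f''(t) = q · coth(f(t)) · (1 + f'(t)²) with f(0) = a, f'(0) = 0. Then for every t ∈ (0, L), t = sinh(a)^q · ∫_a^{f(t)} (sinh(u)^{2q} − sinh(a)^{2q})^{−1/2} du. -/

import Mathlib

/-!
The equation has the first integral `sinh(f)^q / √(1 + f'²)`: its logarithmic derivative vanishes
by the equation. Since `f'' > 0` and `f'(0) = 0`, `f` is strictly increasing on `[0, t]`, and there
the first integral turns `f' · (sinh(f)^{2q} - sinh(a)^{2q})^{-1/2}` into the constant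
`sinh(a)^{-q}`. Integrating over `[0, t]` and substituting `u = f(x)` gives the formula.
-/

open Real Set MeasureTheory

lemma strictMonoOn_Icc_of_hasDerivAt_pos {f f' : ℝ → ℝ} {a b : ℝ}
    (hf : ∀ x ∈ Icc a b, HasDerivAt f (f' x) x) (hf' : ∀ x ∈ Ioo a b, 0 < f' x) :
    StrictMonoOn f (Icc a b) :=
  strictMonoOn_of_hasDerivWithinAt_pos (convex_Icc a b)
    (fun x hx => (hf x hx).continuousAt.continuousWithinAt)
    (fun x hx => (hf x (interior_subset hx)).hasDerivWithinAt)
    (by simpa only [interior_Icc] using hf')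

lemma Real.sq_rpow_neg_half {x : ℝ} (hx : 0 ≤ x) : (x ^ 2) ^ (-(1 : ℝ) / 2) = x⁻¹ := by
  rw [neg_div, rpow_neg (sq_nonneg x), ← sqrt_eq_rpow, sqrt_sq hx]

structure SolvesProfileODE (q : ℝ) (f f' f'' : ℝ → ℝ) (s : Set ℝ) : Prop where
  hasDerivAt : ∀ x ∈ s, HasDerivAt f (f' x) x
  hasDerivAt_deriv : ∀ x ∈ s, HasDerivAt f' (f'' x) x
  pos : ∀ x ∈ s, 0 < f x
  ode : ∀ x ∈ s, f'' x = q * (cosh (f x) / sinh (f x)) * (1 + f' x ^ 2)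

namespace SolvesProfileODE

variable {q T : ℝ} {f f' f'' : ℝ → ℝ} {s : Set ℝ}

lemma mono {t : Set ℝ} (h : SolvesProfileODE q f f' f'' s) (hts : t ⊆ s) :
    SolvesProfileODE q f f' f'' t :=
  ⟨fun x hx => h.hasDerivAt x (hts hx), fun x hx => h.hasDerivAt_deriv x (hts hx),
    fun x hx => h.pos x (hts hx), fun x hx => h.ode x (hts hx)⟩

lemma hasDerivAt_firstIntegral (h : SolvesProfileODE q f f' f'' s) {x : ℝ} (hx : x ∈ s) :
    HasDerivAt (fun y => q * log (sinh (f y)) - log (1 + f' y ^ 2) / 2) 0 x := by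
  have hsinh : sinh (f x) ≠ 0 := (sinh_pos_iff.2 (h.pos x hx)).ne'
  have hden : 1 + f' x ^ 2 ≠ 0 := by positivity
  have hlogsinh := ((hasDerivAt_sinh (f x)).comp x (h.hasDerivAt x hx)).log hsinh
  have hlogden := ((h.hasDerivAt_deriv x hx).pow 2).const_add 1 |>.log hden
  refine ((hlogsinh.const_mul q).sub (hlogden.div_const 2)).congr_deriv ?_
  simp only [Function.comp_apply, Pi.pow_apply, h.ode x hx]
  field_simp
  push_cast
  ring

lemma sinh_rpow_eq (h : SolvesProfileODE q f f' f'' (Icc 0 T)) (hf'0 : f' 0 = 0) {x : ℝ}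
    (hx : x ∈ Icc 0 T) : sinh (f x) ^ (2 * q) = sinh (f 0) ^ (2 * q) * (1 + f' x ^ 2) := by
  have hconst := constant_of_has_deriv_right_zero
    (fun y hy => (h.hasDerivAt_firstIntegral hy).continuousAt.continuousWithinAt)
    (fun y hy => (h.hasDerivAt_firstIntegral (Ico_subset_Icc_self hy)).hasDerivWithinAt) x hx
  norm_num [hf'0] at hconst
  rw [rpow_def_of_pos (sinh_pos_iff.2 (h.pos x hx)),
    rpow_def_of_pos (sinh_pos_iff.2 (h.pos 0 (left_mem_Icc.2 (hx.1.trans hx.2)))),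
    ← exp_log (show 0 < 1 + f' x ^ 2 by positivity), ← exp_add]
  congr 1
  linarith

lemma deriv_pos (h : SolvesProfileODE q f f' f'' (Icc 0 T)) (hq : 0 < q) (hf'0 : f' 0 = 0) :
    ∀ x ∈ Ioc 0 T, 0 < f' x := by
  have hf'mono : StrictMonoOn f' (Icc 0 T) := by
    refine strictMonoOn_Icc_of_hasDerivAt_pos h.hasDerivAt_deriv fun x hx => ?_
    have hfx := h.pos x (Ioo_subset_Icc_self hx)
    rw [h.ode x (Ioo_subset_Icc_self hx)]
    have := sinh_pos_iff.2 hfx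
    positivity
  intro x hx
  simpa only [hf'0] using
    hf'mono (left_mem_Icc.2 (hx.1.le.trans hx.2)) (Ioc_subset_Icc_self hx) hx.1

lemma strictMonoOn (h : SolvesProfileODE q f f' f'' (Icc 0 T)) (hq : 0 < q) (hf'0 : f' 0 = 0) :
    StrictMonoOn f (Icc 0 T) :=
  strictMonoOn_Icc_of_hasDerivAt_pos h.hasDerivAt
    fun x hx => h.deriv_pos hq hf'0 x (Ioo_subset_Ioc_self hx)

lemma abs_deriv_mul_sinh_rpow_sub_rpow_neg_half (h : SolvesProfileODE q f f' f'' (Icc 0 T))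
    (hq : 0 < q) (hf'0 : f' 0 = 0) {x : ℝ} (hx : x ∈ Ioc 0 T) :
    |f' x| * (sinh (f x) ^ (2 * q) - sinh (f 0) ^ (2 * q)) ^ (-(1 : ℝ) / 2) =
      (sinh (f 0) ^ q)⁻¹ := by
  have hx' : x ∈ Icc 0 T := Ioc_subset_Icc_self hx
  have hA : 0 < sinh (f 0) := sinh_pos_iff.2 (h.pos 0 (left_mem_Icc.2 (hx'.1.trans hx'.2)))
  have hAq : 0 < sinh (f 0) ^ q := rpow_pos_of_pos hA q
  have hp := h.deriv_pos hq hf'0 x hx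
  have hsq : sinh (f x) ^ (2 * q) - sinh (f 0) ^ (2 * q) = (sinh (f 0) ^ q * f' x) ^ 2 := by
    rw [h.sinh_rpow_eq hf'0 hx', mul_comm 2 q, rpow_mul hA.le]
    norm_cast
    ring
  rw [hsq, sq_rpow_neg_half (by positivity), abs_of_pos hp]
  field_simp

lemma integral_sinh_rpow_sub_rpow_neg_half (h : SolvesProfileODE q f f' f'' (Icc 0 T)) (hq : 0 < q)
    (hf'0 : f' 0 = 0) (hT : 0 ≤ T) :
    ∫ u in f 0..f T, (sinh u ^ (2 * q) - sinh (f 0) ^ (2 * q)) ^ (-(1 : ℝ) / 2) =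
      T * (sinh (f 0) ^ q)⁻¹ := by
  have hmono := h.strictMonoOn hq hf'0
  have himage : f '' Icc 0 T = Icc (f 0) (f T) :=
    ContinuousOn.image_Icc_of_monotoneOn hT
      (fun x hx => (h.hasDerivAt x hx).continuousAt.continuousWithinAt) hmono.monotoneOn
  have hfT : f 0 ≤ f T := hmono.monotoneOn (left_mem_Icc.2 hT) (right_mem_Icc.2 hT) hT
  rw [intervalIntegral.integral_of_le hfT,
    ← integral_Icc_eq_integral_Ioc, ← himage,
    integral_image_eq_integral_abs_deriv_smul measurableSet_Icc
      (fun x hx => (h.hasDerivAt x hx).hasDerivWithinAt) hmono.injOn,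
    integral_Icc_eq_integral_Ioc]
  simp only [smul_eq_mul]
  rw [setIntegral_congr_fun measurableSet_Ioc
    fun x hx => h.abs_deriv_mul_sinh_rpow_sub_rpow_neg_half hq hf'0 hx]
  simp [hT]

end SolvesProfileODE

theorem stmt_5 (q a : ℝ) (hq : 0 < q)
    (I : Set ℝ) (hIconv : Convex ℝ I) (h0 : (0 : ℝ) ∈ I)
    (f f' f'' : ℝ → ℝ)
    (hf' : ∀ t ∈ I, HasDerivAt f (f' t) t)
    (hf'' : ∀ t ∈ I, HasDerivAt f' (f'' t) t)
    (hpos : ∀ t ∈ I, 0 < f t)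
    (hode : ∀ t ∈ I, f'' t = q * (Real.cosh (f t) / Real.sinh (f t)) * (1 + f' t ^ 2))
    (hfa : f 0 = a) (hf'0 : f' 0 = 0) :
    ∀ t ∈ I, 0 < t →
      t = Real.sinh a ^ q *
        ∫ u in a..f t, (Real.sinh u ^ (2 * q) - Real.sinh a ^ (2 * q)) ^ (-(1 : ℝ) / 2) := by
  intro t ht ht0
  have h : SolvesProfileODE q f f' f'' (Icc 0 t) :=
    SolvesProfileODE.mono ⟨hf', hf'', hpos, hode⟩ (hIconv.ordConnected.out h0 ht)
  have hA : 0 < sinh a ^ q := rpow_pos_of_pos (sinh_pos_iff.2 (hfa ▸ hpos 0 h0)) q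
  rw [← hfa, h.integral_sinh_rpow_sub_rpow_neg_half hq hf'0 ht0.le, hfa]
  field_simp
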